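/- Let k ≥ 2 and let H be a natural number with H < F_k. Then A(H) = #{a ∈ {0,1}^k : X(a) ≤ x_H}, i.e. the partial sum ∑_{n=0}^H R(n) equals the number of binary words of length k whose φ-power sum is at most x_H. -/

import Mathlib

open Real Finset

noncomputable section

/-- The golden mean φ = (1+√5)/2. -/
def phi : ℝ := (1 + Real.sqrt 5) / 2

/-- ψ = (1−√5)/2 = −1/φ. -/
def psi : ℝ := (1 - Real.sqrt 5) / 2

/-- A word `a : Fin k → ℕ` is binary if all its letters are 0 or 1. -/
def IsBin {k : ℕ} (a : Fin k → ℕ) : Prop := ∀ i, a i ≤ 1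

/-- N(a) = ∑_{i=1}^k a_i F_{k+2−i}  (here `i : Fin k` corresponds to `i+1`). -/
def Nw {k : ℕ} (a : Fin k → ℕ) : ℕ := ∑ i : Fin k, a i * Nat.fib (k + 1 - (i : ℕ))

/-- X(a) = ∑_{i=1}^k a_i φ^{k+2−i}. -/
def Xw {k : ℕ} (a : Fin k → ℕ) : ℝ := ∑ i : Fin k, (a i : ℝ) * phi ^ (k + 1 - (i : ℕ))

/-- Y(a) = ∑_{i=1}^k a_i ψ^{k+2−i}. -/
def Yw {k : ℕ} (a : Fin k → ℕ) : ℝ := ∑ i : Fin k, (a i : ℝ) * psi ^ (k + 1 - (i : ℕ))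

/-- R(n): the number of partitions of n into distinct Fibonacci numbers, i.e. the number
of finite sets S of integers, each ≥ 2, with n = ∑_{i∈S} F_i.  (So R(0) = 1.) -/
def R (n : ℕ) : ℕ :=
  Nat.card {S : Finset ℕ // (∀ i ∈ S, 2 ≤ i) ∧ ∑ i ∈ S, Nat.fib i = n}

/-- `IsZeck n b` : `b = b_1⋯b_k` is the Zeckendorf word of `n ≥ 1`, i.e. a binary word
with `b_1 = 1`, no two consecutive 1's, and N(b) = n. -/
def IsZeck (n : ℕ) {k : ℕ} (b : Fin k → ℕ) : Prop :=
  IsBin b ∧ (∀ h : 0 < k, b ⟨0, h⟩ = 1) ∧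
    (∀ i j : Fin k, (j : ℕ) = (i : ℕ) + 1 → b i * b j = 0) ∧ Nw b = n

/-- `IsXY n x y` : `(x, y) = (x_n, y_n)`, i.e. `x = X(b)` and `y = Y(b)` for the
Zeckendorf word `b` of `n` when `n ≥ 1`, and `(x, y) = (0, 0)` when `n = 0`. -/
def IsXY (n : ℕ) (x y : ℝ) : Prop :=
  (n = 0 ∧ x = 0 ∧ y = 0) ∨
    ∃ (k : ℕ) (b : Fin k → ℕ), IsZeck n b ∧ x = Xw b ∧ y = Yw b

/-- The rotation T by 1/φ² on [−1/φ², 1/φ), extended to ℝ by the same formula. -/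
def T (y : ℝ) : ℝ := if y < 1 / phi ^ 3 then y + 1 / phi ^ 2 else y + 1 / phi ^ 2 - 1

/-- A(H) = ∑_{n=0}^H R(n). -/
def Apart (H : ℕ) : ℕ := ∑ n ∈ Finset.range (H + 1), R n

lemma sqrt5_sq : Real.sqrt 5 ^ 2 = 5 := Real.sq_sqrt (by norm_num)
lemma sqrt5_gt : 2 < Real.sqrt 5 := by
  nlinarith [sqrt5_sq, Real.sqrt_nonneg 5]
lemma sqrt5_lt : Real.sqrt 5 < 3 := by
  nlinarith [sqrt5_sq, Real.sqrt_nonneg 5]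
lemma phi_gt : 1 < phi := by unfold phi; nlinarith [sqrt5_gt]
lemma psi_neg : psi < 0 := by unfold psi; nlinarith [sqrt5_gt]
lemma psi_gt : -1 < psi := by unfold psi; nlinarith [sqrt5_lt]
lemma phi_add_psi : phi + psi = 1 := by unfold phi psi; ring
lemma phi_mul_psi : phi * psi = -1 := by unfold phi psi; nlinarith [sqrt5_sq]
lemma phi_sq : phi ^ 2 = phi + 1 := by unfold phi; nlinarith [sqrt5_sq]

lemma fib_real (m : ℕ) : (Nat.fib (m+1) : ℝ) = phi * Nat.fib m + psi ^ m := by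
  induction m with
  | zero => simp
  | succ m ih =>
    rw [Nat.fib_add_two]
    push_cast
    rw [ih]
    linear_combination (-(Nat.fib m : ℝ)) * phi_sq - psi ^ m * phi_add_psi

lemma phi_pow (m : ℕ) : phi ^ (m+1) = Nat.fib (m+1) * phi + Nat.fib m := by
  induction m with
  | zero => simp
  | succ m ih =>
    rw [pow_succ, ih, Nat.fib_add_two]
    push_cast
    linear_combination (Nat.fib (m+1) : ℝ) * phi_sq

def Mw {k : ℕ} (a : Fin k → ℕ) : ℕ := ∑ i : Fin k, a i * Nat.fib (k - (i : ℕ))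
def Pw {k : ℕ} (a : Fin k → ℕ) : ℝ := ∑ i : Fin k, (a i : ℝ) * psi ^ (k - (i : ℕ))

lemma Xw_eq {k : ℕ} (a : Fin k → ℕ) : Xw a = phi * Nw a + Mw a := by
  unfold Xw Nw Mw
  push_cast
  rw [Finset.mul_sum, ← Finset.sum_add_distrib]
  refine Finset.sum_congr rfl fun i _ => ?_
  have hi : k + 1 - (i : ℕ) = (k - (i : ℕ)) + 1 := by omega
  rw [hi, phi_pow]
  ring

lemma Pw_eq {k : ℕ} (a : Fin k → ℕ) : phi * Mw a = Nw a - Pw a := by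
  unfold Nw Mw Pw
  push_cast
  rw [Finset.mul_sum, ← Finset.sum_sub_distrib]
  refine Finset.sum_congr rfl fun i _ => ?_
  have hi : k + 1 - (i : ℕ) = (k - (i : ℕ)) + 1 := by omega
  rw [hi, fib_real]
  ring

lemma Pw_bounds : ∀ {k : ℕ} (a : Fin k → ℕ), IsBin a → -1 < Pw a ∧ Pw a < -psi := by
  intro k
  induction k with
  | zero =>
    intro a _
    simp only [Pw, Finset.univ_eq_empty, Finset.sum_empty]
    exact ⟨by norm_num, by linarith [psi_neg]⟩
  | succ k ih =>
    intro a ha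
    have htail := ih (fun j : Fin k => a j.castSucc) (fun j => ha _)
    have hsplit : Pw a = psi * (Pw (fun j : Fin k => a j.castSucc) + (a (Fin.last k) : ℝ)) := by
      unfold Pw
      rw [Fin.sum_univ_castSucc]
      have h1 : ∀ j : Fin k, (k + 1) - ((j.castSucc : Fin (k+1)) : ℕ) = (k - (j : ℕ)) + 1 := by
        intro j; simp [Fin.coe_castSucc]; omega
      rw [mul_add, Finset.mul_sum]
      congr 1
      · refine Finset.sum_congr rfl fun j _ => ?_
        rw [h1 j, pow_succ]
        ring
      · simp [Fin.val_last]
        ring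
    set S := Pw (fun j : Fin k => a j.castSucc) with hS
    have h0 : (0 : ℝ) ≤ (a (Fin.last k) : ℝ) := Nat.cast_nonneg _
    have h1 : (a (Fin.last k) : ℝ) ≤ 1 := by exact_mod_cast ha (Fin.last k)
    have hφψ := phi_mul_psi
    have hφψ1 := phi_add_psi
    constructor
    · rw [hsplit]
      nlinarith [htail.1, htail.2, psi_neg]
    · rw [hsplit]
      nlinarith [htail.1, htail.2, psi_neg]

lemma Mw_cast {k : ℕ} (a : Fin k → ℕ) : (Mw a : ℝ) = ((Nw a : ℝ) - Pw a) / phi := by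
  have h := Pw_eq a
  have hp : phi ≠ 0 := by linarith [phi_gt]
  field_simp
  linarith [h]

lemma Xw_le_iff {k m : ℕ} (a : Fin k → ℕ) (c : Fin m → ℕ) (ha : IsBin a) (hc : IsBin c) :
    Xw a ≤ Xw c ↔ Nw a ≤ Nw c := by
  have key : ∀ {k' m' : ℕ} (a' : Fin k' → ℕ) (c' : Fin m' → ℕ), IsBin a' → IsBin c' →
      Nw a' < Nw c' → Xw a' < Xw c' := by
    intro k' m' a' c' ha' hc' hlt
    have e1 := Xw_eq a'
    have e2 := Xw_eq c'
    have m1 := Mw_cast a'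
    have m2 := Mw_cast c'
    have b1 := Pw_bounds a' ha'
    have b2 := Pw_bounds c' hc'
    have hN : (Nw a' : ℝ) + 1 ≤ (Nw c' : ℝ) := by exact_mod_cast hlt
    have hp : (0:ℝ) < phi := by linarith [phi_gt]
    have hMa := Pw_eq a'
    have hMc := Pw_eq c'
    rw [e1, e2]
    set Na := (Nw a' : ℝ); set Nc := (Nw c' : ℝ); set Ma := (Mw a' : ℝ); set Mc := (Mw c' : ℝ)
    have expand : phi * ((phi * Nc + Mc) - (phi * Na + Ma))
        = (phi ^ 2) * (Nc - Na) + (phi * Mc - phi * Ma) := by ring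
    rw [phi_sq, hMa, hMc] at expand
    have hψ : psi = 1 - phi := by linarith [phi_add_psi]
    have hpos : phi * ((phi * Nc + Mc) - (phi * Na + Ma)) > 0 := by
      rw [expand]
      have hb1 := b1.1
      have hb2 := b2.2
      rw [hψ] at hb2
      have h3 : (phi + 1) * (Nc - Na) ≥ phi + 1 := by nlinarith [hN, hp]
      linarith
    nlinarith [hpos, hp]
  have keq : ∀ {k' m' : ℕ} (a' : Fin k' → ℕ) (c' : Fin m' → ℕ), IsBin a' → IsBin c' →
      Nw a' = Nw c' → Xw a' = Xw c' := by
    intro k' m' a' c' ha' hc' heq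
    have e1 := Xw_eq a'
    have e2 := Xw_eq c'
    have hMeq : Mw a' = Mw c' := by
      have m1 := Pw_eq a'
      have m2 := Pw_eq c'
      have b1 := Pw_bounds a' ha'
      have b2 := Pw_bounds c' hc'
      have hN : (Nw a' : ℝ) = (Nw c' : ℝ) := by exact_mod_cast heq
      have hφψ1 := phi_add_psi
      have hg := phi_gt
      have h1 : (Mw a' : ℝ) < (Mw c' : ℝ) + 1 := by nlinarith
      have h2 : (Mw c' : ℝ) < (Mw a' : ℝ) + 1 := by nlinarith
      have h1' : Mw a' < Mw c' + 1 := by exact_mod_cast h1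
      have h2' : Mw c' < Mw a' + 1 := by exact_mod_cast h2
      omega
    rw [e1, e2, heq, hMeq]
  constructor
  · intro hx
    by_contra hn
    push_neg at hn
    exact absurd (key c a hc ha hn) (not_lt.mpr hx)
  · intro hn
    rcases lt_or_eq_of_le hn with h | h
    · exact le_of_lt (key a c ha hc h)
    · exact le_of_eq (keq a c ha hc h)

def W (k : ℕ) : Finset (Fin k → ℕ) := Fintype.piFinset fun _ => ({0, 1} : Finset ℕ)

lemma mem_W {k : ℕ} (a : Fin k → ℕ) : a ∈ W k ↔ IsBin a := by
  simp only [W, Fintype.mem_piFinset, Finset.mem_insert, Finset.mem_singleton, IsBin]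
  constructor
  · intro h i; rcases h i with h' | h' <;> omega
  · intro h i; rcases Nat.le_one_iff_eq_zero_or_eq_one.mp (h i) with h' | h' <;> simp [h']

lemma cardSubtype {k : ℕ} (p : (Fin k → ℕ) → Prop) [DecidablePred p] :
    Nat.card {a : Fin k → ℕ // IsBin a ∧ p a} = ((W k).filter p).card := by
  rw [← Fintype.card_coe ((W k).filter p), ← Nat.card_eq_fintype_card]
  exact Nat.card_congr (Equiv.subtypeEquivRight fun a => by
    simp [Finset.mem_filter, mem_W, and_comm])

lemma filter_sum {k H : ℕ} :
    ((W k).filter fun a => Nw a ≤ H).card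
      = ∑ n ∈ Finset.range (H + 1), ((W k).filter fun a => Nw a = n).card := by
  rw [Finset.card_eq_sum_card_fiberwise
    (f := Nw) (t := Finset.range (H + 1))
    (fun a ha => by simp only [Finset.mem_coe, Finset.mem_filter] at ha; simp [Finset.mem_range]; omega)]
  refine Finset.sum_congr rfl fun n hn => ?_
  simp only [Finset.mem_range] at hn
  congr 1
  rw [Finset.filter_filter]
  apply Finset.filter_congr
  intro a _
  constructor
  · rintro ⟨h1, h2⟩; exact h2
  · intro h; exact ⟨by omega, h⟩

noncomputable def key_equiv {k n : ℕ} (hk : 2 ≤ k) (hn : n < Nat.fib k) :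
    {S : Finset ℕ // (∀ i ∈ S, 2 ≤ i) ∧ ∑ i ∈ S, Nat.fib i = n}
      ≃ {a : Fin k → ℕ // IsBin a ∧ Nw a = n} := by
  have hinj : ∀ i j : Fin k, k + 1 - (i : ℕ) = k + 1 - (j : ℕ) → i = j := by
    intro i j h
    have hi := i.isLt; have hj := j.isLt
    exact Fin.ext (by omega)
  have hmem : ∀ (S : Finset ℕ), (∀ i ∈ S, 2 ≤ i) → (∑ i ∈ S, Nat.fib i = n) →
      ∀ j ∈ S, 2 ≤ j ∧ j < k := by
    intro S h1 h2 j hj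
    refine ⟨h1 j hj, ?_⟩
    by_contra h
    push_neg at h
    have hfib : Nat.fib k ≤ Nat.fib j := Nat.fib_mono h
    have hle : Nat.fib j ≤ ∑ i ∈ S, Nat.fib i :=
      Finset.single_le_sum (fun i _ => Nat.zero_le _) hj
    omega
  have himg : ∀ (S : Finset ℕ), (∀ j ∈ S, 2 ≤ j ∧ j < k) →
      Finset.image (fun i : Fin k => k + 1 - (i : ℕ))
        (Finset.univ.filter fun i : Fin k => k + 1 - (i : ℕ) ∈ S) = S := by
    intro S hS
    ext j
    simp only [Finset.mem_image, Finset.mem_filter, Finset.mem_univ, true_and]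
    constructor
    · rintro ⟨i, hi, rfl⟩; exact hi
    · intro hj
      obtain ⟨h2, hlt⟩ := hS j hj
      have hv : k + 1 - ((⟨k + 1 - j, by omega⟩ : Fin k) : ℕ) = j := by
        show k + 1 - (k + 1 - j) = j; omega
      exact ⟨⟨k + 1 - j, by omega⟩, by rw [hv]; exact hj, hv⟩
  have hNw : ∀ (S : Finset ℕ), (∀ j ∈ S, 2 ≤ j ∧ j < k) →
      Nw (fun i : Fin k => if k + 1 - (i : ℕ) ∈ S then 1 else 0) = ∑ j ∈ S, Nat.fib j := by
    intro S hS
    unfold Nw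
    have step1 : ∑ i : Fin k, (if k + 1 - (i : ℕ) ∈ S then 1 else 0) * Nat.fib (k + 1 - (i : ℕ))
        = ∑ i ∈ Finset.univ.filter (fun i : Fin k => k + 1 - (i : ℕ) ∈ S),
            Nat.fib (k + 1 - (i : ℕ)) := by
      rw [Finset.sum_filter]
      refine Finset.sum_congr rfl fun i _ => ?_
      split_ifs with h <;> simp
    rw [step1]
    conv_rhs => rw [← himg S hS]
    rw [Finset.sum_image (fun i _ j _ h => hinj i j h)]
  refine
    { toFun := fun S => ⟨fun i => if k + 1 - (i : ℕ) ∈ S.1 then 1 else 0,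
        fun i => by dsimp only; split_ifs <;> omega,
        by rw [hNw S.1 (hmem S.1 S.2.1 S.2.2)]; exact S.2.2⟩
      invFun := fun a => ⟨Finset.image (fun i : Fin k => k + 1 - (i : ℕ))
          (Finset.univ.filter fun i => a.1 i = 1), ?_, ?_⟩
      left_inv := ?_
      right_inv := ?_ }
  · intro j hj
    simp only [Finset.mem_image, Finset.mem_filter, Finset.mem_univ, true_and] at hj
    obtain ⟨i, _, rfl⟩ := hj
    have := i.isLt; omega
  · rw [Finset.sum_image (fun i _ j _ h => hinj i j h), Finset.sum_filter]
    have heq : ∀ i : Fin k, (if a.1 i = 1 then Nat.fib (k + 1 - (i : ℕ)) else 0)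
        = a.1 i * Nat.fib (k + 1 - (i : ℕ)) := by
      intro i
      have h1 := a.2.1 i
      interval_cases h : (a.1 i) <;> simp
    rw [Finset.sum_congr rfl fun i _ => heq i]
    exact a.2.2
  · rintro ⟨S, hS1, hS2⟩
    apply Subtype.ext
    dsimp only
    have hfc : (Finset.univ.filter fun i : Fin k =>
          (if k + 1 - (i : ℕ) ∈ S then 1 else 0) = 1)
        = Finset.univ.filter fun i : Fin k => k + 1 - (i : ℕ) ∈ S := by
      apply Finset.filter_congr
      intro i _
      split_ifs with h <;> simp [h]
    rw [hfc]
    exact himg S (hmem S hS1 hS2)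
  · rintro ⟨a, ha, hNa⟩
    apply Subtype.ext
    funext i
    dsimp only
    have hmem' : (k + 1 - (i : ℕ) ∈ Finset.image (fun i : Fin k => k + 1 - (i : ℕ))
        (Finset.univ.filter fun i => a i = 1)) ↔ a i = 1 := by
      simp only [Finset.mem_image, Finset.mem_filter, Finset.mem_univ, true_and]
      constructor
      · rintro ⟨i', hi', heq⟩
        rwa [hinj i' i heq] at hi'
      · intro h; exact ⟨i, h, rfl⟩
    have hbi := ha i
    split_ifs with h
    · rw [hmem'] at h; omega
    · rw [hmem'] at h; omega

lemma R_eq {k n : ℕ} (hk : 2 ≤ k) (hn : n < Nat.fib k) :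
    R n = ((W k).filter fun a => Nw a = n).card := by
  rw [← cardSubtype (fun a => Nw a = n)]
  exact Nat.card_congr (key_equiv hk hn)


/-- for k ≥ 2 and H < F_k, A(H) equals the number of binary words of
length k with X(a) ≤ x_H. -/
theorem stmt_18 (k : ℕ) (hk : 2 ≤ k) (H : ℕ) (hH : H < Nat.fib k)
    (x y : ℝ) (hx : IsXY H x y) :
    Apart H = Nat.card {a : Fin k → ℕ // IsBin a ∧ Xw a ≤ x} := by
  obtain ⟨m, c, hcb, hcN, hcX⟩ : ∃ (m : ℕ) (c : Fin m → ℕ), IsBin c ∧ Nw c = H ∧ Xw c = x := by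
    rcases hx with ⟨h0, hx0, -⟩ | ⟨m, b, hz, hxe, -⟩
    · exact ⟨0, fun _ => 0, fun i => Nat.zero_le _, by simp [Nw, h0], by simp [Xw, hx0]⟩
    · exact ⟨m, b, hz.1, hz.2.2.2, hxe.symm⟩
  have hiff : ∀ a : Fin k → ℕ, (IsBin a ∧ Xw a ≤ x) ↔ (IsBin a ∧ Nw a ≤ H) := by
    intro a
    constructor
    · rintro ⟨hb, hle⟩
      rw [← hcX] at hle
      exact ⟨hb, hcN ▸ (Xw_le_iff a c hb hcb).mp hle⟩
    · rintro ⟨hb, hle⟩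
      rw [← hcX]
      exact ⟨hb, (Xw_le_iff a c hb hcb).mpr (by omega)⟩
  rw [Nat.card_congr (Equiv.subtypeEquivRight hiff)]
  rw [cardSubtype (fun a => Nw a ≤ H), filter_sum]
  unfold Apart
  refine Finset.sum_congr rfl fun nn hnn => ?_
  simp only [Finset.mem_range] at hnn
  exact R_eq hk (by omega)

end
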